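/- arXiv:2302.08981 — 2 statements merged into one kernel-verified Lean document; each statement's English description precedes it below -/
import Mathlib

section
/- Let f : 2^U → ℝ be a monotone nondecreasing submodular set function with f(∅) = 0 on a finite ground set U. The greedy algorithm that iteratively adds the element with the largest marginal gain produces, after b steps, a set S_b with f(S_b) ≥ (1 − 1/e) max_{|S| ≤ b} f(S). -/
/-!
Submodularity bounds the gain of adding all of an optimal set `T` to the current greedy set `S`
by the sum of the single-element gains, hence by `|T|` times the greedy gain. So each greedy step
closes at least a `1/b` fraction of the gap `f T - f S`, and after `b` steps the gap is at most
`(1 - 1/b)^b ≤ 1/e` times the initial gap `f T`.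
-/

open Finset

section SetFunction

variable {U β : Type*} [DecidableEq U] [AddCommGroup β] [PartialOrder β] [IsOrderedAddMonoid β]

def IsSubmodular (f : Finset U → β) : Prop :=
  ∀ (S T : Finset U) (x : U), S ⊆ T → x ∉ T →
    f (insert x T) - f T ≤ f (insert x S) - f S

theorem IsSubmodular.sub_le_sum_marginal {f : Finset U → β} (hf : IsSubmodular f)
    (S A : Finset U) : f (S ∪ A) - f S ≤ ∑ x ∈ A, (f (insert x S) - f S) := by
  induction A using Finset.induction_on with
  | empty => simp
  | insert a A ha ih =>
    rw [sum_insert ha, union_insert, ← sub_add_sub_cancel _ (f (S ∪ A))]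
    refine add_le_add ?_ ih
    by_cases haS : a ∈ S
    · simp [haS]
    · exact hf S (S ∪ A) a subset_union_left (by simp [haS, ha])

theorem sub_le_card_nsmul_greedy_gain {f : Finset U → β} (hmono : Monotone f)
    (hsub : IsSubmodular f) {S : Finset U} {x : U}
    (hmax : ∀ y, f (insert y S) ≤ f (insert x S)) (T : Finset U) :
    f T - f S ≤ #T • (f (insert x S) - f S) :=
  calc f T - f S ≤ f (S ∪ T) - f S := sub_le_sub_right (hmono subset_union_right) _
    _ ≤ ∑ y ∈ T, (f (insert y S) - f S) := hsub.sub_le_sum_marginal S T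
    _ ≤ #T • (f (insert x S) - f S) :=
      sum_le_card_nsmul _ _ _ fun y _ => sub_le_sub_right (hmax y) _

end SetFunction

theorem sub_le_one_sub_inv_pow_mul {a : ℕ → ℝ} {M k : ℝ} (hk : 1 ≤ k)
    (h : ∀ i, M - a i ≤ k * (a (i + 1) - a i)) (n : ℕ) :
    M - a n ≤ (1 - 1 / k) ^ n * (M - a 0) := by
  induction n with
  | zero => simp
  | succ n ih =>
    have hstep : M - a (n + 1) ≤ (1 - 1 / k) * (M - a n) := by
      have hgain : (M - a n) / k ≤ a (n + 1) - a n := (div_le_iff₀' (by linarith)).2 (h n)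
      linarith [one_sub_mul (1 / k) (M - a n), one_div_mul_eq_div k (M - a n)]
    have hc : 0 ≤ 1 - 1 / k := sub_nonneg.2 ((div_le_one (by linarith)).2 hk)
    calc M - a (n + 1) ≤ (1 - 1 / k) * (M - a n) := hstep
      _ ≤ (1 - 1 / k) * ((1 - 1 / k) ^ n * (M - a 0)) := mul_le_mul_of_nonneg_left ih hc
      _ = (1 - 1 / k) ^ (n + 1) * (M - a 0) := by ring

theorem greedy_submodular_approximation_general
    {U : Type*} [DecidableEq U]
    (f : Finset U → ℝ)
    (hmono : ∀ S T : Finset U, S ⊆ T → f S ≤ f T)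
    (hsubmod : ∀ (S T : Finset U) (x : U), S ⊆ T → x ∉ T →
      f (insert x T) - f T ≤ f (insert x S) - f S)
    (hempty : f ∅ = 0)
    (Sgreedy : ℕ → Finset U) (hS0 : Sgreedy 0 = ∅)
    (hgreedy : ∀ i, ∃ x : U, Sgreedy (i + 1) = insert x (Sgreedy i) ∧
      ∀ y : U, f (insert y (Sgreedy i)) ≤ f (insert x (Sgreedy i)))
    (b : ℕ) (T : Finset U) (hT : T.card ≤ b) :
    (1 - 1 / Real.exp 1) * f T ≤ f (Sgreedy b) := by
  have hmono' : Monotone f := fun S T h => hmono S T h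
  have hfT : 0 ≤ f T := hempty ▸ hmono' (empty_subset T)
  rcases Nat.eq_zero_or_pos b with rfl | hb
  · simp [card_eq_zero.1 (Nat.le_zero.1 hT), hS0, hempty]
  have hstep : ∀ i, f T - f (Sgreedy i) ≤ b * (f (Sgreedy (i + 1)) - f (Sgreedy i)) := by
    intro i
    obtain ⟨x, hx, hmax⟩ := hgreedy i
    have hgain : 0 ≤ f (insert x (Sgreedy i)) - f (Sgreedy i) :=
      sub_nonneg.2 (hmono' (subset_insert x _))
    rw [hx]
    calc f T - f (Sgreedy i) ≤ #T • (f (insert x (Sgreedy i)) - f (Sgreedy i)) :=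
          sub_le_card_nsmul_greedy_gain hmono' hsubmod hmax T
      _ ≤ b * (f (insert x (Sgreedy i)) - f (Sgreedy i)) := by
          rw [nsmul_eq_mul]; gcongr
  have hgap := sub_le_one_sub_inv_pow_mul (by exact_mod_cast hb) hstep b
  rw [hS0, hempty, sub_zero] at hgap
  have hexp : (1 - 1 / (b : ℝ)) ^ b ≤ 1 / Real.exp 1 := by
    simpa [Real.exp_neg] using
      Real.one_sub_div_pow_le_exp_neg (n := b) (t := 1) (by exact_mod_cast hb)
  linarith [mul_le_mul_of_nonneg_right hexp hfT]

/-- The greedy algorithm for maximizing a monotone nondecreasing submodular set function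
`f` with `f ∅ = 0` achieves, after `b` steps, a `(1 − 1/e)`-approximation of the optimal
value over sets of cardinality at most `b`. -/
theorem greedy_submodular_approximation
    {U : Type*} [Fintype U] [DecidableEq U]
    (f : Finset U → ℝ)
    (hmono : ∀ S T : Finset U, S ⊆ T → f S ≤ f T)
    (hsubmod : ∀ (S T : Finset U) (x : U), S ⊆ T → x ∉ T →
      f (insert x T) - f T ≤ f (insert x S) - f S)
    (hempty : f ∅ = 0)
    (Sgreedy : ℕ → Finset U) (hS0 : Sgreedy 0 = ∅)
    (hgreedy : ∀ i, ∃ x : U, Sgreedy (i + 1) = insert x (Sgreedy i) ∧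
      ∀ y : U, f (insert y (Sgreedy i)) ≤ f (insert x (Sgreedy i)))
    (b : ℕ) (T : Finset U) (hT : T.card ≤ b) :
    (1 - 1 / Real.exp 1) * f T ≤ f (Sgreedy b) :=
  greedy_submodular_approximation_general f hmono hsubmod hempty Sgreedy hS0 hgreedy b T hT
end

section
/- Let Σ be an N×N symmetric positive definite matrix and σ > 0. The set function f(S) = (1/2) log det(Σ_S + σ² I_{|S|}) − (|S|/2) log(σ²), where Σ_S is the principal submatrix of Σ indexed by S, is monotone nondecreasing and submodular with f(∅) = 0. -/
/-!
Put `M = Σ + σ² I`. Bordering the principal submatrix `M_S` by an index `x ∉ S` multiplies its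
determinant by the Schur complement `s(S, x) = M_xx - M_xS M_S⁻¹ M_Sx`, so
`f (insert x S) - f S = ½ (log s(S, x) - log σ²)`. For symmetric positive definite `M`, `s(S, x)`
is the minimum of `wᵀ M w` over the vectors `w` supported on `S ∪ {x}` with `w x = 1`
(complete the square in the `S`-coordinates). Enlarging `S` enlarges this feasible set, so
`s(·, x)` is antitone, which is submodularity; and `wᵀ M w ≥ σ² wᵀ w ≥ σ²`, which is monotonicity.
-/

open Finset

namespace Matrix

variable {ι R : Type*}

def principalSubmatrix (M : Matrix ι ι R) (S : Finset ι) : Matrix S S R :=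
  M.submatrix (↑) (↑)

theorem principalSubmatrix_insert_eq [DecidableEq ι] {M : Matrix ι ι R} {S : Finset ι} {x : ι}
    (hx : x ∉ S) :
    M.principalSubmatrix (insert x S) =
      (fromBlocks (M.principalSubmatrix S) (replicateCol Unit fun i : S => M i x)
        (replicateRow Unit fun i : S => M x i) (of fun _ _ => M x x)).submatrix
        ((subtypeInsertEquivOption hx).trans (Equiv.optionEquivSumPUnit S))
        ((subtypeInsertEquivOption hx).trans (Equiv.optionEquivSumPUnit S)) := by
  ext ⟨i, hi⟩ ⟨j, hj⟩
  by_cases hix : i = x <;> by_cases hjx : j = x <;>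
    simp [subtypeInsertEquivOption, principalSubmatrix, hix, hjx]

theorem principalSubmatrix_add_smul_one [DecidableEq ι] [Semiring R] (A : Matrix ι ι R) (c : R)
    (S : Finset ι) : (A + c • 1).principalSubmatrix S = A.principalSubmatrix S + c • 1 := by
  rw [principalSubmatrix, ← submatrix_one ((↑) : S → ι) Subtype.val_injective]
  rfl

theorem IsSymm.principalSubmatrix {M : Matrix ι ι R} (hM : M.IsSymm) (S : Finset ι) :
    (M.principalSubmatrix S).IsSymm :=
  hM.submatrix _

theorem dotProduct_eq_mul_add_dotProduct_restrict [Fintype ι] [DecidableEq ι]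
    [NonUnitalNonAssocSemiring R] {S : Finset ι} {x : ι} {w : ι → R} (hx : x ∉ S)
    (hw : ∀ j ∉ insert x S, w j = 0) (c : ι → R) :
    w ⬝ᵥ c = w x * c x + (fun i : S => w i) ⬝ᵥ (fun i : S => c i) :=
  calc w ⬝ᵥ c = ∑ j ∈ insert x S, w j * c j :=
        (sum_subset (subset_univ _) fun j _ hj => by rw [hw j hj, zero_mul]).symm
    _ = w x * c x + ∑ j ∈ S, w j * c j := sum_insert hx
    _ = _ := by rw [← sum_coe_sort S]; rfl

section CommRing

variable [CommRing R]

theorem IsSymm.dotProduct_mulVec_comm [Fintype ι] {A : Matrix ι ι R} (hA : A.IsSymm)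
    (u v : ι → R) : u ⬝ᵥ (A *ᵥ v) = v ⬝ᵥ (A *ᵥ u) := by
  rw [dotProduct_mulVec, ← mulVec_transpose, hA.eq, dotProduct_comm]

theorem IsSymm.dotProduct_mulVec_add_inv_mulVec [Fintype ι] [DecidableEq ι] {A : Matrix ι ι R}
    (hA : A.IsSymm) (hdet : IsUnit A.det) (r v : ι → R) :
    (r + A⁻¹ *ᵥ v) ⬝ᵥ (A *ᵥ (r + A⁻¹ *ᵥ v)) =
      r ⬝ᵥ (A *ᵥ r) + 2 * (r ⬝ᵥ v) + v ⬝ᵥ (A⁻¹ *ᵥ v) := by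
  have hcancel : A *ᵥ (A⁻¹ *ᵥ v) = v := by
    rw [mulVec_mulVec, mul_nonsing_inv _ hdet, one_mulVec]
  rw [mulVec_add, hcancel, add_dotProduct, dotProduct_add, dotProduct_add,
    hA.dotProduct_mulVec_comm (A⁻¹ *ᵥ v), hcancel, dotProduct_comm (A⁻¹ *ᵥ v)]
  ring

variable [DecidableEq ι]

noncomputable def schurCompl (M : Matrix ι ι R) (S : Finset ι) (x : ι) : R :=
  M x x - (fun i : S => M x i) ⬝ᵥ ((M.principalSubmatrix S)⁻¹ *ᵥ fun i : S => M i x)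

variable {M : Matrix ι ι R} {S T : Finset ι} {x : ι}

theorem det_principalSubmatrix_insert (hx : x ∉ S) (hS : IsUnit (M.principalSubmatrix S).det) :
    (M.principalSubmatrix (insert x S)).det =
      (M.principalSubmatrix S).det * M.schurCompl S x := by
  have := (M.principalSubmatrix S).invertibleOfIsUnitDet hS
  rw [principalSubmatrix_insert_eq hx, det_submatrix_equiv_self, det_fromBlocks₁₁,
    invOf_eq_nonsing_inv, det_unique (n := Unit), ← replicateRow_vecMul,
    replicateRow_mul_replicateCol, ← dotProduct_mulVec]
  rfl

theorem IsSymm.schurCompl_eq (hM : M.IsSymm) :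
    M.schurCompl S x = M x x - (fun i : S => M i x) ⬝ᵥ
      ((M.principalSubmatrix S)⁻¹ *ᵥ fun i : S => M i x) := by
  simp only [schurCompl, hM.apply x]

variable [Fintype ι]

theorem IsSymm.dotProduct_mulVec_self_eq_of_support (hM : M.IsSymm) (hx : x ∉ S) {w : ι → R}
    (hwx : w x = 1) (hw : ∀ j ∉ insert x S, w j = 0) :
    w ⬝ᵥ (M *ᵥ w) = M x x + 2 * ((fun i : S => w i) ⬝ᵥ fun i : S => M i x) +
      (fun i : S => w i) ⬝ᵥ (M.principalSubmatrix S *ᵥ fun i : S => w i) := by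
  have hrow (j : ι) : (M *ᵥ w) j = M j x + (fun i : S => w i) ⬝ᵥ fun i : S => M j i := by
    rw [mulVec_apply, dotProduct_comm, dotProduct_eq_mul_add_dotProduct_restrict hx hw, hwx,
      one_mul]
    rfl
  have hrestrict : (fun i : S => (M *ᵥ w) i) =
      (fun i : S => M i x) + M.principalSubmatrix S *ᵥ fun i : S => w i := by
    ext i
    rw [hrow, dotProduct_comm]
    rfl
  rw [dotProduct_eq_mul_add_dotProduct_restrict hx hw, hwx, one_mul, hrestrict, hrow,
    dotProduct_add]
  simp only [hM.apply x]
  ring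

theorem exists_dotProduct_mulVec_eq_schurCompl (hM : M.IsSymm)
    (hS : IsUnit (M.principalSubmatrix S).det) (hx : x ∉ S) :
    ∃ w : ι → R, w x = 1 ∧ (∀ j ∉ insert x S, w j = 0) ∧ w ⬝ᵥ (M *ᵥ w) = M.schurCompl S x := by
  set v : S → R := fun i => M i x
  set u : S → R := -((M.principalSubmatrix S)⁻¹ *ᵥ v)
  set w : ι → R := Function.extend (↑) u (Pi.single x 1)
  have hwS (i : S) : w i = u i := Subtype.val_injective.extend_apply _ _ _
  have hwS' {j : ι} (hj : j ∉ S) : w j = (Pi.single x 1 : ι → R) j :=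
    Function.extend_apply' _ _ _ <| by rintro ⟨i, rfl⟩; exact hj i.2
  have hwx : w x = 1 := by rw [hwS' hx, Pi.single_eq_same]
  have hw (j : ι) (hj : j ∉ insert x S) : w j = 0 := by
    rw [mem_insert, not_or] at hj
    rw [hwS' hj.2, Pi.single_eq_of_ne hj.1]
  refine ⟨w, hwx, hw, ?_⟩
  have hsq := (hM.principalSubmatrix S).dotProduct_mulVec_add_inv_mulVec hS u v
  rw [neg_add_cancel, zero_dotProduct] at hsq
  rw [hM.dotProduct_mulVec_self_eq_of_support hx hwx hw, hM.schurCompl_eq, funext hwS]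
  linear_combination -hsq

end CommRing

section Real

variable {M : Matrix ι ι ℝ} {S T : Finset ι} {x : ι}

theorem PosDef.isSymm (hM : M.PosDef) : M.IsSymm :=
  isHermitian_iff_isSymm.1 hM.isHermitian

theorem PosDef.principalSubmatrix (hM : M.PosDef) (S : Finset ι) :
    (M.principalSubmatrix S).PosDef :=
  hM.submatrix Subtype.val_injective

variable [DecidableEq ι]

theorem PosDef.isUnit_det_principalSubmatrix (hM : M.PosDef) (S : Finset ι) :
    IsUnit (M.principalSubmatrix S).det :=
  (hM.principalSubmatrix S).det_pos.ne'.isUnit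

variable [Fintype ι]

theorem PosDef.schurCompl_le_dotProduct_mulVec (hM : M.PosDef) (hx : x ∉ S) {w : ι → ℝ}
    (hwx : w x = 1) (hw : ∀ j ∉ insert x S, w j = 0) :
    M.schurCompl S x ≤ w ⬝ᵥ (M *ᵥ w) := by
  have hA := hM.principalSubmatrix S
  have hsq := hA.isSymm.dotProduct_mulVec_add_inv_mulVec hA.det_pos.ne'.isUnit
    (fun i : S => w i) (fun i : S => M i x)
  have hnonneg := hA.posSemidef.dotProduct_mulVec_nonneg
    ((fun i : S => w i) + (M.principalSubmatrix S)⁻¹ *ᵥ fun i : S => M i x)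
  rw [star_trivial, hsq] at hnonneg
  rw [hM.isSymm.dotProduct_mulVec_self_eq_of_support hx hwx hw, hM.isSymm.schurCompl_eq]
  linarith

theorem PosDef.schurCompl_le_of_subset (hM : M.PosDef) (hST : S ⊆ T) (hxT : x ∉ T) :
    M.schurCompl T x ≤ M.schurCompl S x := by
  obtain ⟨w, hwx, hw, hq⟩ := exists_dotProduct_mulVec_eq_schurCompl hM.isSymm
    (hM.isUnit_det_principalSubmatrix S) fun hxS => hxT (hST hxS)
  exact hq ▸ hM.schurCompl_le_dotProduct_mulVec hxT hwx fun j hj =>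
    hw j fun hjS => hj (insert_subset_insert x hST hjS)

theorem PosSemidef.le_schurCompl_add_smul_one {A : Matrix ι ι ℝ} (hA : A.PosSemidef) {c : ℝ}
    (hc : 0 < c) (hx : x ∉ S) : c ≤ (A + c • 1).schurCompl S x := by
  have hM : (A + c • 1).PosDef := PosDef.posSemidef_add hA (PosDef.one.smul hc)
  obtain ⟨w, hwx, -, hq⟩ := exists_dotProduct_mulVec_eq_schurCompl hM.isSymm
    (hM.isUnit_det_principalSubmatrix S) hx
  have hquad : 0 ≤ w ⬝ᵥ (A *ᵥ w) := by simpa using hA.dotProduct_mulVec_nonneg w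
  have hnorm : 1 ≤ w ⬝ᵥ w := by
    simpa [hwx, dotProduct] using single_le_sum (fun j _ => mul_self_nonneg (w j)) (mem_univ x)
  rw [← hq, add_mulVec, dotProduct_add, smul_mulVec, one_mulVec, dotProduct_smul, smul_eq_mul]
  nlinarith

end Real

end Matrix

open Matrix Real

theorem gaussian_information_gain_monotone_submodular_general
    (N : ℕ) (Sig : Matrix (Fin N) (Fin N) ℝ)
    (hPD : Sig.PosDef) (σ : ℝ) (hσ : 0 < σ)
    (f : Finset (Fin N) → ℝ)
    (hf : ∀ S : Finset (Fin N), f S =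
      (1 / 2) * Real.log
        ((Sig.submatrix (fun i : {x // x ∈ S} => (i : Fin N))
            (fun i : {x // x ∈ S} => (i : Fin N))
          + σ ^ 2 • (1 : Matrix {x // x ∈ S} {x // x ∈ S} ℝ)).det)
      - (S.card / 2 : ℝ) * Real.log (σ ^ 2)) :
    f ∅ = 0 ∧
    (∀ S T : Finset (Fin N), S ⊆ T → f S ≤ f T) ∧
    (∀ (S T : Finset (Fin N)) (x : Fin N), S ⊆ T → x ∉ T →
      f (insert x T) - f T ≤ f (insert x S) - f S) := by
  set M := Sig + σ ^ 2 • (1 : Matrix (Fin N) (Fin N) ℝ)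
  have hσ2 : 0 < σ ^ 2 := pow_pos hσ 2
  have hM : M.PosDef := hPD.add_posSemidef (PosSemidef.one.smul hσ2.le)
  have hσ2_le {S : Finset (Fin N)} {x : Fin N} (hx : x ∉ S) : σ ^ 2 ≤ M.schurCompl S x :=
    hPD.posSemidef.le_schurCompl_add_smul_one hσ2 hx
  have hfM (S : Finset (Fin N)) :
      f S = 1 / 2 * log (M.principalSubmatrix S).det - (S.card / 2 : ℝ) * log (σ ^ 2) := by
    rw [hf, principalSubmatrix_add_smul_one]
    rfl
  have hgain {S : Finset (Fin N)} {x : Fin N} (hx : x ∉ S) :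
      f (insert x S) - f S = 1 / 2 * (log (M.schurCompl S x) - log (σ ^ 2)) := by
    rw [hfM, hfM, det_principalSubmatrix_insert hx (hM.isUnit_det_principalSubmatrix S),
      log_mul (hM.principalSubmatrix S).det_pos.ne' (hσ2.trans_le (hσ2_le hx)).ne',
      card_insert_of_notMem hx]
    push_cast
    ring
  refine ⟨by simp [hf], (monotone_iff_forall_le_insert.2 fun S x hx => ?_ : Monotone f),
    fun S T x hST hxT => ?_⟩
  · linarith [hgain hx, log_le_log hσ2 (hσ2_le hx)]
  · linarith [hgain hxT, hgain fun hxS => hxT (hST hxS),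
      log_le_log (hσ2.trans_le (hσ2_le hxT)) (hM.schurCompl_le_of_subset hST hxT)]

/-- For `Σ` symmetric positive definite and `σ > 0`, the set function
`f(S) = (1/2) log det(Σ_S + σ² I) − (|S|/2) log σ²` (joint-Gaussian information gain)
is monotone nondecreasing and submodular with `f ∅ = 0`. -/
theorem gaussian_information_gain_monotone_submodular
    (N : ℕ) (Sig : Matrix (Fin N) (Fin N) ℝ)
    (hSym : Sig.IsSymm) (hPD : Sig.PosDef) (σ : ℝ) (hσ : 0 < σ)
    (f : Finset (Fin N) → ℝ)
    (hf : ∀ S : Finset (Fin N), f S =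
      (1 / 2) * Real.log
        ((Sig.submatrix (fun i : {x // x ∈ S} => (i : Fin N))
            (fun i : {x // x ∈ S} => (i : Fin N))
          + σ ^ 2 • (1 : Matrix {x // x ∈ S} {x // x ∈ S} ℝ)).det)
      - (S.card / 2 : ℝ) * Real.log (σ ^ 2)) :
    f ∅ = 0 ∧
    (∀ S T : Finset (Fin N), S ⊆ T → f S ≤ f T) ∧
    (∀ (S T : Finset (Fin N)) (x : Fin N), S ⊆ T → x ∉ T →
      f (insert x T) - f T ≤ f (insert x S) - f S) :=
  gaussian_information_gain_monotone_submodular_general N Sig hPD σ hσ f hf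
end
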